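/- Let W_{1,α²} (α ≠ 0) be the Lie algebra with basis {V_n : n ≥ 1} and the structure equations [V_n,V_m] = (m−n)V_{n+m} for n,m odd, = (m−n)(V_{n+m}+α²V_{n+m−2}) for n,m even, = (m−n)V_{n+m}+(m−n−1)α²V_{n+m−2} for n odd, m even. Then the commutator ideal [W_{1,α²}, W_{1,α²}] equals the span of {V_n : n ≥ 3}, and consequently dim W_{1,α²}/[W_{1,α²},W_{1,α²}] = 2. -/

import Mathlib

noncomputable section

/-- Index set: integers `n ≥ 1`. -/
abbrev PosIdx : Type := {n : ℤ // 1 ≤ n}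

/-- Bilinear extension of structure constants `C` to a bracket on the free module. -/
def brP (C : PosIdx → PosIdx → (PosIdx →₀ ℂ)) (x y : PosIdx →₀ ℂ) : PosIdx →₀ ℂ :=
  x.sum fun n a => y.sum fun m b => (a * b) • C n m

/-- Structure constants of `W_{1,α²}`, defined by parity and extended skew-symmetrically. -/
def w1C (α : ℂ) (n m : PosIdx) : PosIdx →₀ ℂ :=
  if h1 : Odd n.1 then
    if h2 : Odd m.1 then
      Finsupp.single ⟨n.1 + m.1, by have := n.2; have := m.2; omega⟩ ((m.1 : ℂ) - n.1)
    else
      Finsupp.single ⟨n.1 + m.1, by have := n.2; have := m.2; omega⟩ ((m.1 : ℂ) - n.1)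
        + Finsupp.single ⟨n.1 + m.1 - 2, by
            have := n.2; have := m.2
            obtain ⟨k, hk⟩ := Int.not_odd_iff_even.mp h2; omega⟩
          (((m.1 : ℂ) - n.1 - 1) * α ^ 2)
  else
    if h2 : Odd m.1 then
      -(Finsupp.single ⟨n.1 + m.1, by have := n.2; have := m.2; omega⟩ ((n.1 : ℂ) - m.1)
        + Finsupp.single ⟨n.1 + m.1 - 2, by
            have := n.2; have := m.2
            obtain ⟨k, hk⟩ := Int.not_odd_iff_even.mp h1; omega⟩
          (((n.1 : ℂ) - m.1 - 1) * α ^ 2))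
    else
      Finsupp.single ⟨n.1 + m.1, by have := n.2; have := m.2; omega⟩ ((m.1 : ℂ) - n.1)
        + Finsupp.single ⟨n.1 + m.1 - 2, by
            have := n.2; have := m.2
            obtain ⟨k, hk⟩ := Int.not_odd_iff_even.mp h1; omega⟩
          (((m.1 : ℂ) - n.1) * α ^ 2)

/-! The structure constants never involve `V_1` or `V_2`: the only brackets whose indices could
drop below `3`, namely `[V_1, V_1]`, `[V_1, V_2]` and `[V_2, V_2]`, have vanishing coefficients.
Conversely `[V_1, V_{k-1}] = (k - 2) V_k + c V_{k-2}` with `c = 0` for `k ≤ 4`, so by induction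
every `V_k` with `k ≥ 3` lies in the commutator ideal. That ideal is therefore the span of the
`V_k`, `k ≥ 3`, which has the complement `span {V_1, V_2}`. -/

open Finsupp Submodule

lemma Finsupp.single_mem_supported_of_notMem {ι M R : Type*} [Semiring R] [AddCommMonoid M]
    [Module R M] {s : Set ι} {a : ι} {b : M} (h : a ∉ s → b = 0) :
    single a b ∈ supported M R s := by
  by_cases ha : a ∈ s
  · exact single_mem_supported R b ha
  · rw [h ha, single_zero]
    exact zero_mem _

lemma Finsupp.finrank_quotient_supported_compl {K ι : Type*} [Field K] (s : Finset ι) :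
    Module.finrank K ((ι →₀ K) ⧸ supported K K (↑s : Set ι)ᶜ) = s.card := by
  have hcompl : IsCompl (supported K K (↑s : Set ι)ᶜ) (supported K K ↑s) :=
    ⟨disjoint_supported_supported isCompl_compl.symm.disjoint,
      codisjoint_supported_supported isCompl_compl.symm.codisjoint⟩
  rw [(quotientEquivOfIsCompl _ _ hcompl).finrank_eq, (supportedEquivFinsupp _).finrank_eq,
    Module.finrank_finsupp_self]
  simp

section brP

variable (C : PosIdx → PosIdx → (PosIdx →₀ ℂ))

lemma brP_single (n m : PosIdx) (a b : ℂ) :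
    brP C (single n a) (single m b) = (a * b) • C n m := by
  rw [brP, sum_single_index, sum_single_index] <;> simp

lemma brP_mem_of_forall {S : Submodule ℂ (PosIdx →₀ ℂ)} (hC : ∀ n m, C n m ∈ S)
    (x y : PosIdx →₀ ℂ) : brP C x y ∈ S :=
  Submodule.finsuppSum_mem ℂ _ x _ fun n _ ↦
    Submodule.finsuppSum_mem ℂ _ y _ fun m _ ↦ smul_mem _ _ (hC n m)

lemma span_brP_eq_span_structureConstants :
    span ℂ {z | ∃ x y, z = brP C x y} = span ℂ {z | ∃ n m, z = C n m} := by
  apply le_antisymm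
  · rw [span_le]
    rintro _ ⟨x, y, rfl⟩
    exact brP_mem_of_forall C (fun n m ↦ subset_span (by exact ⟨n, m, rfl⟩)) x y
  · rw [span_le]
    rintro _ ⟨n, m, rfl⟩
    exact subset_span ⟨single n 1, single m 1, by rw [brP_single, one_mul, one_smul]⟩

end brP

lemma w1C_mem_supported (α : ℂ) (n m : PosIdx) :
    w1C α n m ∈ supported ℂ ℂ {p : PosIdx | 3 ≤ p.1} := by
  obtain ⟨n, hn⟩ := n
  obtain ⟨m, hm⟩ := m
  unfold w1C
  split_ifs with h1 h2 h2 <;> simp only [Int.odd_iff] at h1 h2 <;>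
    repeat' first | apply neg_mem | apply add_mem | apply single_mem_supported_of_notMem
  all_goals
    intro h
    simp only [Set.mem_ofPred_eq, not_le] at h
    dsimp only
    first
    | (norm_cast; omega)
    | (apply mul_eq_zero_of_left; norm_cast; omega)

lemma w1C_one_left (α : ℂ) (k : ℤ) (hk : 3 ≤ k) :
    w1C α ⟨1, le_rfl⟩ ⟨k - 1, by omega⟩ = single ⟨k, by omega⟩ ((k : ℂ) - 2)
      + single ⟨k - 2, by omega⟩ (if Odd k then ((k : ℂ) - 3) * α ^ 2 else 0) := by
  ext ⟨p, hp⟩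
  rcases Int.even_or_odd k with hev | hodd
  · have hodd' : Odd (k - 1) := hev.sub_odd odd_one
    simp only [w1C, odd_one, hodd', dite_true, Int.not_odd_iff_even.mpr hev, if_false,
      Finsupp.add_apply, single_apply, Subtype.mk.injEq]
    split_ifs <;> push_cast <;> first | omega | ring
  · have hev' : ¬ Odd (k - 1) := Int.not_odd_iff_even.mpr (hodd.sub_odd odd_one)
    simp only [w1C, odd_one, hev', hodd, dite_true, dite_false, if_true,
      Finsupp.add_apply, single_apply, Subtype.mk.injEq]
    split_ifs <;> push_cast <;> first | omega | ring

lemma single_mem_span_w1C (α : ℂ) (k : ℤ) (hk : 3 ≤ k) :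
    single (⟨k, by omega⟩ : PosIdx) (1 : ℂ) ∈ span ℂ {z | ∃ n m, z = w1C α n m} := by
  induction k using Int.strongRec (m := 3) with
  | lt k hlt => omega
  | ge k _ ih =>
    set K := span ℂ {z | ∃ n m, z = w1C α n m}
    have hbracket : w1C α ⟨1, le_rfl⟩ ⟨k - 1, by omega⟩ ∈ K :=
      subset_span ⟨_, _, rfl⟩
    rw [w1C_one_left α k hk] at hbracket
    have hlower : single (⟨k - 2, by omega⟩ : PosIdx)
        (if Odd k then ((k : ℂ) - 3) * α ^ 2 else 0) ∈ K := by
      by_cases h3 : 3 ≤ k - 2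
      · rw [← smul_single_one]
        exact K.smul_mem _ (ih (k - 2) (by omega) h3)
      · split_ifs with hodd
        · obtain rfl : k = 3 := by obtain ⟨j, hj⟩ := hodd; omega
          norm_num
        · rw [single_zero]
          exact K.zero_mem
    have hk2 : (k : ℂ) - 2 ≠ 0 := sub_ne_zero.mpr (by exact_mod_cast (by omega : k ≠ 2))
    have hleading := K.sub_mem hbracket hlower
    rwa [add_sub_cancel_right, ← smul_single_one, K.smul_mem_iff hk2] at hleading

lemma span_w1C_eq_supported (α : ℂ) :
    span ℂ {z | ∃ n m, z = w1C α n m} = supported ℂ ℂ {p : PosIdx | 3 ≤ p.1} := by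
  apply le_antisymm
  · rw [span_le]
    rintro _ ⟨n, m, rfl⟩
    exact w1C_mem_supported α n m
  · rw [supported_eq_span_single, span_le]
    rintro _ ⟨⟨k, _⟩, hk, rfl⟩
    exact single_mem_span_w1C α k hk

theorem w1_commutator_ideal_general (α : ℂ) :
    Submodule.span ℂ {z : PosIdx →₀ ℂ | ∃ x y, z = brP (w1C α) x y}
      = Submodule.span ℂ {z : PosIdx →₀ ℂ | ∃ n : PosIdx, 3 ≤ n.1 ∧ z = Finsupp.single n 1} ∧
    Module.finrank ℂ
      ((PosIdx →₀ ℂ) ⧸ Submodule.span ℂ {z : PosIdx →₀ ℂ | ∃ x y, z = brP (w1C α) x y}) = 2 := by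
  rw [span_brP_eq_span_structureConstants, span_w1C_eq_supported]
  refine ⟨?_, ?_⟩
  · rw [supported_eq_span_single]
    congr 1
    ext
    simp [eq_comm]
  · have hlow : {p : PosIdx | 3 ≤ p.1}
        = (↑({⟨1, le_rfl⟩, ⟨2, by norm_num⟩} : Finset PosIdx))ᶜ := by
      ext ⟨p, hp⟩
      simp only [Set.mem_ofPred_eq, Finset.coe_insert, Finset.coe_singleton, Set.mem_compl_iff,
        Set.mem_insert_iff, Set.mem_singleton_iff, Subtype.mk.injEq]
      omega
    rw [hlow, finrank_quotient_supported_compl]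
    rfl

/-- The commutator ideal of `W_{1,α²}` is the span of `{V_n : n ≥ 3}`, and the quotient
by it has dimension `2`. -/
theorem w1_commutator_ideal (α : ℂ) (hα : α ≠ 0) :
    Submodule.span ℂ {z : PosIdx →₀ ℂ | ∃ x y, z = brP (w1C α) x y}
      = Submodule.span ℂ {z : PosIdx →₀ ℂ | ∃ n : PosIdx, 3 ≤ n.1 ∧ z = Finsupp.single n 1} ∧
    Module.finrank ℂ
      ((PosIdx →₀ ℂ) ⧸ Submodule.span ℂ {z : PosIdx →₀ ℂ | ∃ x y, z = brP (w1C α) x y}) = 2 :=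
  w1_commutator_ideal_general α
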